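/- arXiv:2206.04884 — 5 statements merged into one kernel-verified Lean document; each statement's English description precedes it below -/
import Mathlib

section
/- For a prime p and real α with 0 < α < 1, the quantity C_α := lim_{s→0⁺} (1 - 1/(B_α Ĵ(s))) equals p^{1-α} ((p^α - 1)/(p - 1))², and satisfies 0 < C_α < 1. Equivalently, B_α · Ĵ(0) = 1/(1 - C_α), where Ĵ(0) = (1-p^{-1}) Σ_{n=0}^∞ p^{-n(1-α)} = (1-p^{-1})/(1 - p^{α-1}) and B_α = (1-p^{-1})/(1-p^{-α-1}). -/
/-!
For `s > 0` the summand `p^{-n}/(s + p^{-αn})` is dominated by its value `(p^{α-1})^n` at `s = 0`,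
a summable geometric sequence since `α < 1`; dominated convergence gives `Ĵ(s) → Ĵ(0)`.
The rest is algebra in `a = p^α`: `1 - C_α = (p - a)(ap - 1)/(a(p-1)²)`, positive because
`1 < a < p`, and `B_α Ĵ(0)` is its reciprocal.
-/

open Real Filter Topology

theorem tendsto_tsum_div_add_nhdsGT_zero {c d : ℕ → ℝ} (hc : ∀ n, 0 ≤ c n) (hd : ∀ n, 0 < d n)
    (hsum : Summable fun n => c n / d n) :
    Tendsto (fun s => ∑' n, c n / (s + d n)) (𝓝[>] 0) (𝓝 (∑' n, c n / d n)) := by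
  refine tendsto_tsum_of_dominated_convergence hsum (fun n => ?_) ?_
  · have hcont : ContinuousAt (fun s => c n / (s + d n)) 0 :=
      continuousAt_const.div (continuousAt_id.add continuousAt_const) (by simpa using (hd n).ne')
    simpa using hcont.tendsto.mono_left nhdsWithin_le_nhds
  · filter_upwards [self_mem_nhdsWithin] with s (hs : 0 < s) n
    rw [Real.norm_of_nonneg (div_nonneg (hc n) (by linarith [hd n]))]
    exact div_le_div_of_nonneg_left (hc n) (hd n) (by linarith)

section Rpow

variable {q : ℝ}

lemma rpow_neg_natCast_div_rpow_neg_mul (hq : 0 < q) (α : ℝ) (n : ℕ) :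
    q ^ (-(n : ℝ)) / q ^ (-(α * n)) = (q ^ (α - 1)) ^ n := by
  rw [← rpow_natCast, ← rpow_mul hq.le, ← rpow_sub hq]
  ring_nf

lemma rpow_neg_natCast_mul_one_sub (hq : 0 < q) (α : ℝ) (n : ℕ) :
    q ^ (-(n : ℝ) * (1 - α)) = (q ^ (α - 1)) ^ n := by
  rw [← rpow_natCast, ← rpow_mul hq.le]
  ring_nf

lemma rpow_sub_one_lt_one (hq : 1 < q) {α : ℝ} (hα : α < 1) : q ^ (α - 1) < 1 :=
  rpow_lt_one_of_one_lt_of_neg hq (by linarith)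

lemma tsum_rpow_neg_natCast_mul_one_sub (hq : 1 < q) {α : ℝ} (hα : α < 1) :
    ∑' n : ℕ, q ^ (-(n : ℝ) * (1 - α)) = (1 - q ^ (α - 1))⁻¹ := by
  simp only [rpow_neg_natCast_mul_one_sub (zero_lt_one.trans hq)]
  exact tsum_geometric_of_lt_one (rpow_nonneg (by linarith) _) (rpow_sub_one_lt_one hq hα)

theorem tendsto_tsum_rpow_div_add_rpow (hq : 1 < q) {α : ℝ} (hα : α < 1) :
    Tendsto (fun s => ∑' n : ℕ, q ^ (-(n : ℝ)) / (s + q ^ (-(α * n)))) (𝓝[>] 0)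
      (𝓝 (1 - q ^ (α - 1))⁻¹) := by
  have hq0 : 0 < q := zero_lt_one.trans hq
  have hgeom := tsum_geometric_of_lt_one (rpow_nonneg hq0.le _) (rpow_sub_one_lt_one hq hα)
  have hsum := summable_geometric_of_lt_one (rpow_nonneg hq0.le _) (rpow_sub_one_lt_one hq hα)
  simp only [← rpow_neg_natCast_div_rpow_neg_mul hq0 α] at hgeom hsum
  rw [← hgeom]
  exact tendsto_tsum_div_add_nhdsGT_zero (fun n => (rpow_pos_of_pos hq0 _).le)
    (fun n => rpow_pos_of_pos hq0 _) hsum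

end Rpow

section Algebra

variable {a q : ℝ}

lemma one_sub_div_mul_div_sq (ha : a ≠ 0) (hq : q ≠ 1) :
    1 - q / a * ((a - 1) / (q - 1)) ^ 2 = (q - a) * (a * q - 1) / (a * (q - 1) ^ 2) := by
  field_simp [sub_ne_zero.2 hq]
  ring

lemma div_mul_div_sq_lt_one (ha : 1 < a) (haq : a < q) : q / a * ((a - 1) / (q - 1)) ^ 2 < 1 := by
  have hq : 1 < q := ha.trans haq
  rw [← sub_pos, one_sub_div_mul_div_sq (by positivity) hq.ne']
  exact div_pos (mul_pos (sub_pos.2 haq) (by nlinarith)) (by positivity)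

lemma div_one_sub_mul_div_one_sub (hq : q ≠ 0) (hq1 : q ≠ 1) (ha : a ≠ 0) :
    (1 - q⁻¹) / (1 - (a * q)⁻¹) * ((1 - q⁻¹) / (1 - a / q)) =
      1 / (1 - q / a * ((a - 1) / (q - 1)) ^ 2) := by
  rw [one_sub_div_mul_div_sq ha hq1, one_div_div]
  field_simp

end Algebra

/-- For `0 < α < 1`, `C_α = lim_{s→0⁺} (1 - 1/(B_α Ĵ(s))) = p^{1-α}((p^α-1)/(p-1))²`,
  with `0 < C_α < 1`, and `B_α Ĵ(0) = 1/(1-C_α)` where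
  `Ĵ(0) = (1-p⁻¹) Σ p^{-n(1-α)} = (1-p⁻¹)/(1-p^{α-1})`. -/
theorem stmt4 (p : ℕ) (hp : p.Prime) (α : ℝ) (hα0 : 0 < α) (hα1 : α < 1)
    (Bα Cα Jhat0 : ℝ) (Jhat : ℝ → ℝ)
    (hB : Bα = (1 - (p : ℝ)⁻¹) / (1 - (p : ℝ) ^ (-α - 1)))
    (hC : Cα = (p : ℝ) ^ (1 - α) * (((p : ℝ) ^ α - 1) / ((p : ℝ) - 1)) ^ 2)
    (hJ0 : Jhat0 = (1 - (p : ℝ)⁻¹) / (1 - (p : ℝ) ^ (α - 1)))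
    (hJhat : ∀ s : ℝ, Jhat s = (1 - (p : ℝ)⁻¹) *
      ∑' n : ℕ, (p : ℝ) ^ (-(n : ℝ)) / (s + (p : ℝ) ^ (-(α * (n : ℝ))))) :
    Filter.Tendsto (fun s : ℝ => 1 - 1 / (Bα * Jhat s))
        (nhdsWithin 0 (Set.Ioi 0)) (nhds Cα) ∧
      (0 < Cα ∧ Cα < 1) ∧
      Bα * Jhat0 = 1 / (1 - Cα) ∧
      Jhat0 = (1 - (p : ℝ)⁻¹) * ∑' n : ℕ, (p : ℝ) ^ (-(n : ℝ) * (1 - α)) := by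
  have hq : (1 : ℝ) < p := by exact_mod_cast hp.one_lt
  have hq0 : (0 : ℝ) < p := by linarith
  set q : ℝ := (p : ℝ)
  set a := q ^ α
  have ha : 1 < a := one_lt_rpow hq hα0
  have haq : a < q := by simpa using rpow_lt_rpow_of_exponent_lt hq hα1
  have hC' : Cα = q / a * ((a - 1) / (q - 1)) ^ 2 := by rw [hC, rpow_sub hq0, rpow_one]
  have hBJ : Bα * Jhat0 = 1 / (1 - Cα) := by
    rw [hB, hJ0, hC', show -α - 1 = -(α + 1) by ring, rpow_neg hq0.le, rpow_add hq0,
      rpow_sub hq0, rpow_one, div_one_sub_mul_div_one_sub hq0.ne' hq.ne' (by positivity)]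
  have hJ : Tendsto Jhat (𝓝[>] 0) (𝓝 Jhat0) := by
    rw [funext hJhat, hJ0, div_eq_mul_inv]
    exact (tendsto_tsum_rpow_div_add_rpow hq hα1).const_mul _
  have hC1 : Cα < 1 := hC' ▸ div_mul_div_sq_lt_one ha haq
  refine ⟨?_, ⟨?_, hC1⟩, hBJ, ?_⟩
  · have hBJ0 : Bα * Jhat0 ≠ 0 := hBJ ▸ one_div_ne_zero (sub_ne_zero.2 hC1.ne')
    have hlim := ((hJ.const_mul Bα).inv₀ hBJ0).const_sub 1
    rw [hBJ, one_div, inv_inv, sub_sub_cancel] at hlim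
    simpa only [one_div] using hlim
  · have : 0 < a - 1 := sub_pos.2 ha
    have : 0 < q - 1 := sub_pos.2 hq
    rw [hC']
    positivity
  · rw [tsum_rpow_neg_natCast_mul_one_sub hq hα1, hJ0, div_eq_mul_inv]
end

section
/- For a prime p and real α with 0 < α < 1, the return probability C_α = p^{1-α} ((p^α-1)/(p-1))² is strictly less than 1, and C_α → 1 as α → 1⁻. -/
open Real Filter

/-- For `0 < α < 1`, the return probability `C_α = p^{1-α}((p^α-1)/(p-1))²` is `< 1`,
  and `C_α → 1` as `α → 1⁻`. -/
theorem stmt5 (p : ℕ) (hp : p.Prime) :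
    (∀ α : ℝ, α ∈ Set.Ioo (0 : ℝ) 1 →
      (p : ℝ) ^ (1 - α) * (((p : ℝ) ^ α - 1) / ((p : ℝ) - 1)) ^ 2 < 1) ∧
    Filter.Tendsto
      (fun α : ℝ => (p : ℝ) ^ (1 - α) * (((p : ℝ) ^ α - 1) / ((p : ℝ) - 1)) ^ 2)
      (nhdsWithin 1 (Set.Iio 1)) (nhds 1) := by
  have hp1 : (1 : ℝ) < p := by exact_mod_cast hp.one_lt
  have hp0 : (0 : ℝ) < p := lt_trans one_pos hp1
  constructor
  · rintro α ⟨hα0, hα1⟩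
    set x := (p : ℝ) ^ α with hxdef
    have hx1 : 1 < x := Real.one_lt_rpow_iff_of_pos hp0 |>.mpr (Or.inl ⟨hp1, hα0⟩)
    have hxp : x < p := by
      have := Real.rpow_lt_rpow_of_exponent_lt hp1 hα1
      rwa [Real.rpow_one] at this
    have hsub : (p : ℝ) ^ (1 - α) = p / x := by
      rw [Real.rpow_sub hp0, Real.rpow_one]
    rw [hsub, div_pow, div_mul_div_comm, div_lt_one (mul_pos (lt_trans one_pos hx1) (pow_pos (by linarith) 2))]
    nlinarith [mul_pos (by nlinarith : (0:ℝ) < p * x - 1) (by linarith : (0:ℝ) < p - x)]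
  · have hcont : ContinuousAt
        (fun α : ℝ => (p : ℝ) ^ (1 - α) * (((p : ℝ) ^ α - 1) / ((p : ℝ) - 1)) ^ 2) 1 := by
      have h1 : ContinuousAt (fun α : ℝ => (p : ℝ) ^ (1 - α)) 1 :=
        (Real.continuousAt_const_rpow (ne_of_gt hp0)).comp
          ((continuous_const.sub continuous_id).continuousAt)
      have h2 : ContinuousAt (fun α : ℝ => (p : ℝ) ^ α) 1 :=
        Real.continuousAt_const_rpow (ne_of_gt hp0)
      exact h1.mul ((((h2.sub continuousAt_const).div continuousAt_const
        (by intro; linarith)).pow 2))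
    have hval : (p : ℝ) ^ (1 - (1:ℝ)) * (((p : ℝ) ^ (1:ℝ) - 1) / ((p : ℝ) - 1)) ^ 2 = 1 := by
      rw [sub_self, Real.rpow_zero, Real.rpow_one, div_self (by linarith), one_pow, one_mul]
    have := hcont.tendsto
    rw [hval] at this
    exact this.mono_left nhdsWithin_le_nhds
end

section
/- Asymptotics of the mean sojourn time for α > 1: there exist constants 0 < c₁ ≤ c₂ such that for all sufficiently large t, c₁ t^{(α-1)/α} ≤ ∫_0^t J(t') dt' ≤ c₂ t^{(α-1)/α}, where J(t) = (1-p^{-1}) Σ_{n=0}^∞ p^{-n} e^{-p^{-αn} t}. -/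
open Real MeasureTheory intervalIntegral

/-!
Up to the factor `1 - p⁻¹`, `J t = ∑ p⁻ⁿ exp (-t / p^{αn})`. For `t ≥ 1` choose `n` with
`pⁿ ≤ t^{1/α} < pⁿ⁺¹`. The `(n+1)`-st term alone is at least `e⁻¹ / (p t^{1/α})`. Via
`exp (-y) ≤ 1 / y`, the earlier terms are bounded by a geometric sum in `p^{α-1}`, which is dominated
by its last term; the later terms form a geometric tail in `p⁻¹`. Hence `J t ≍ t^{-1/α}`. Because
`J` is antitone, `∫₀ᵗ J ≥ t J t`, and integrating the upper bound, which holds for all `t > 0`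
since `J ≤ 1`, gives `∫₀ᵗ J ≤ C t^{1-1/α}`.
-/

lemma mul_le_integral_of_antitoneOn {f : ℝ → ℝ} {t : ℝ} (ht : 0 ≤ t)
    (hf : AntitoneOn f (Set.Icc 0 t)) : t * f t ≤ ∫ s in (0 : ℝ)..t, f s := by
  have hint : IntervalIntegrable f volume 0 t :=
    AntitoneOn.intervalIntegrable (by rwa [Set.uIcc_of_le ht])
  have h := integral_mono_on ht intervalIntegrable_const hint
    fun s hs => hf hs (Set.right_mem_Icc.2 ht) hs.2
  simpa using h

lemma integral_le_of_le_mul_rpow {f : ℝ → ℝ} {C β t : ℝ} (hβ : β < 1) (ht : 0 ≤ t)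
    (hf : IntervalIntegrable f volume 0 t) (hle : ∀ s ∈ Set.Ioo 0 t, f s ≤ C * s ^ (-β)) :
    ∫ s in (0 : ℝ)..t, f s ≤ C / (1 - β) * t ^ (1 - β) := by
  have hβ' : -1 < -β := by linarith
  calc ∫ s in (0 : ℝ)..t, f s ≤ ∫ s in (0 : ℝ)..t, C * s ^ (-β) :=
        integral_mono_on_of_le_Ioo ht hf ((intervalIntegrable_rpow' hβ').const_mul C) hle
    _ = C / (1 - β) * t ^ (1 - β) := by
        rw [intervalIntegral.integral_const_mul, integral_rpow (Or.inl hβ'), neg_add_eq_sub,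
          zero_rpow (by linarith), sub_zero, mul_div_assoc', div_mul_eq_mul_div]

lemma exp_neg_le_inv {y : ℝ} (hy : 0 < y) : exp (-y) ≤ y⁻¹ := by
  rw [exp_neg]
  exact inv_anti₀ hy (by linarith [add_one_le_exp y])

noncomputable def sojournSum (P α t : ℝ) : ℝ :=
  ∑' n : ℕ, P⁻¹ ^ n * exp (-(t / (P ^ n) ^ α))

section sojournSum

variable {P α t : ℝ}

lemma sojournSum_eq_tsum_rpow (hP : 0 < P) :
    sojournSum P α t = ∑' n : ℕ, P ^ (-(n : ℝ)) * exp (-P ^ (-(α * n)) * t) := by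
  refine tsum_congr fun n => ?_
  rw [rpow_neg hP.le, rpow_natCast, inv_pow, rpow_neg hP.le, mul_comm α, rpow_mul hP.le,
    rpow_natCast, div_eq_inv_mul, neg_mul]

lemma sojournSum_term_le (hP : 0 ≤ P) (ht : 0 ≤ t) (n : ℕ) :
    P⁻¹ ^ n * exp (-(t / (P ^ n) ^ α)) ≤ P⁻¹ ^ n := by
  have : 0 ≤ t / (P ^ n) ^ α := by positivity
  exact mul_le_of_le_one_right (by positivity) (exp_le_one_iff.2 (by linarith))

lemma summable_sojournSum (hP : 1 < P) (ht : 0 ≤ t) :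
    Summable fun n : ℕ => P⁻¹ ^ n * exp (-(t / (P ^ n) ^ α)) :=
  (summable_geometric_of_lt_one (by positivity) (inv_lt_one_of_one_lt₀ hP)).of_nonneg_of_le
    (fun n => by positivity) (sojournSum_term_le (by linarith) ht)

lemma sojournSum_le_inv_one_sub (hP : 1 < P) (ht : 0 ≤ t) :
    sojournSum P α t ≤ (1 - P⁻¹)⁻¹ := by
  rw [← tsum_geometric_of_lt_one (by positivity) (inv_lt_one_of_one_lt₀ hP)]
  exact (summable_sojournSum hP ht).tsum_le_tsum (sojournSum_term_le (by linarith) ht)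
    (summable_geometric_of_lt_one (by positivity) (inv_lt_one_of_one_lt₀ hP))

lemma sojournSum_antitoneOn (hP : 1 < P) : AntitoneOn (sojournSum P α) (Set.Ici 0) := by
  intro s hs u hu hsu
  refine (summable_sojournSum hP hu).tsum_le_tsum (fun n => ?_) (summable_sojournSum hP hs)
  gcongr

lemma sum_range_sojournSum_le (hP : 1 < P) (hα : 1 < α) (ht : 0 < t) (N : ℕ) :
    ∑ k ∈ Finset.range N, P⁻¹ ^ k * exp (-(t / (P ^ k) ^ α)) ≤
      (P ^ (α - 1)) ^ N / (P ^ (α - 1) - 1) / t := by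
  have hP0 : 0 < P := by linarith
  have hr : 1 < P ^ (α - 1) := one_lt_rpow hP (by linarith)
  have hterm (k : ℕ) : P⁻¹ ^ k * exp (-(t / (P ^ k) ^ α)) ≤ (P ^ (α - 1)) ^ k / t := by
    calc P⁻¹ ^ k * exp (-(t / (P ^ k) ^ α)) ≤ P⁻¹ ^ k * (t / (P ^ k) ^ α)⁻¹ := by
          gcongr; exact exp_neg_le_inv (by positivity)
      _ = (P ^ k) ^ α / P ^ k / t := by rw [inv_pow, inv_div]; ring
      _ = (P ^ (α - 1)) ^ k / t := by
          rw [← rpow_sub_one (by positivity), rpow_pow_comm hP0.le]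
  calc ∑ k ∈ Finset.range N, P⁻¹ ^ k * exp (-(t / (P ^ k) ^ α))
      ≤ ∑ k ∈ Finset.range N, (P ^ (α - 1)) ^ k / t := Finset.sum_le_sum fun k _ => hterm k
    _ = ((P ^ (α - 1)) ^ N - 1) / (P ^ (α - 1) - 1) / t := by
        rw [← Finset.sum_div, geom_sum_eq hr.ne']
    _ ≤ (P ^ (α - 1)) ^ N / (P ^ (α - 1) - 1) / t := by
        gcongr
        linarith

lemma tsum_sojournSum_nat_add_le (hP : 1 < P) (ht : 0 ≤ t) (N : ℕ) :
    ∑' k : ℕ, P⁻¹ ^ (k + N) * exp (-(t / (P ^ (k + N)) ^ α)) ≤ P⁻¹ ^ N * (1 - P⁻¹)⁻¹ := by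
  have hgeom := summable_geometric_of_lt_one (by positivity) (inv_lt_one_of_one_lt₀ hP)
  calc ∑' k : ℕ, P⁻¹ ^ (k + N) * exp (-(t / (P ^ (k + N)) ^ α))
      ≤ ∑' k : ℕ, P⁻¹ ^ N * P⁻¹ ^ k :=
        ((summable_nat_add_iff N).2 (summable_sojournSum hP ht)).tsum_le_tsum
          (fun k => by rw [← pow_add, add_comm N]; exact sojournSum_term_le (by linarith) ht _)
          (hgeom.mul_left _)
    _ = P⁻¹ ^ N * (1 - P⁻¹)⁻¹ := by
        rw [tsum_mul_left, tsum_geometric_of_lt_one (by positivity) (inv_lt_one_of_one_lt₀ hP)]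

lemma le_sojournSum (hP : 1 < P) (hα : 0 < α) (ht : 1 ≤ t) :
    (P * exp 1)⁻¹ * t ^ (-α⁻¹) ≤ sojournSum P α t := by
  set x := t ^ α⁻¹
  have hx : 1 ≤ x := one_le_rpow ht (by positivity)
  have hxt : x ^ α = t := rpow_inv_rpow (by linarith) hα.ne'
  obtain ⟨n, hn, hn'⟩ := exists_nat_pow_near hx hP
  have hweight : (P * x)⁻¹ ≤ P⁻¹ ^ (n + 1) := by
    rw [inv_pow, pow_succ']
    exact inv_anti₀ (by positivity) (by gcongr)
  have hdecay : t / (P ^ (n + 1)) ^ α ≤ 1 := by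
    rw [div_le_one (by positivity), ← hxt]
    exact rpow_le_rpow (by linarith) hn'.le hα.le
  calc (P * exp 1)⁻¹ * t ^ (-α⁻¹) = (P * x)⁻¹ * exp (-1) := by
        rw [rpow_neg (by linarith), exp_neg]; ring
    _ ≤ P⁻¹ ^ (n + 1) * exp (-(t / (P ^ (n + 1)) ^ α)) :=
        mul_le_mul hweight (exp_le_exp.2 (by linarith)) (by positivity) (by positivity)
    _ ≤ sojournSum P α t :=
        (summable_sojournSum hP (by linarith)).le_tsum _ fun k _ => by positivity

lemma sojournSum_le_mul_rpow (hP : 1 < P) (hα : 1 < α) (ht : 0 < t) :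
    sojournSum P α t ≤
      (P ^ (α - 1) / (P ^ (α - 1) - 1) + (1 - P⁻¹)⁻¹) * t ^ (-α⁻¹) := by
  have hr : 1 < P ^ (α - 1) := one_lt_rpow hP (by linarith)
  have hP' : 0 < 1 - P⁻¹ := sub_pos.2 (inv_lt_one_of_one_lt₀ hP)
  rcases le_total t 1 with ht1 | ht1
  · have : 1 ≤ t ^ (-α⁻¹) :=
      one_le_rpow_of_pos_of_le_one_of_nonpos ht ht1 (neg_nonpos.2 (by positivity))
    have : 0 ≤ P ^ (α - 1) / (P ^ (α - 1) - 1) := div_nonneg (by linarith) (by linarith)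
    calc sojournSum P α t ≤ (1 - P⁻¹)⁻¹ := sojournSum_le_inv_one_sub hP ht.le
      _ ≤ _ := by nlinarith [inv_pos.2 hP']
  set x := t ^ α⁻¹
  have hx : 1 ≤ x := one_le_rpow ht1 (by positivity)
  have hxt : x ^ α = t := rpow_inv_rpow ht.le (by linarith)
  have hx' : t ^ (-α⁻¹) = x⁻¹ := rpow_neg ht.le _
  obtain ⟨n, hn, hn'⟩ := exists_nat_pow_near hx hP
  have hhead : (P ^ (α - 1)) ^ (n + 1) / (P ^ (α - 1) - 1) / t ≤
      P ^ (α - 1) / (P ^ (α - 1) - 1) * x⁻¹ := by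
    have hrn : (P ^ (α - 1)) ^ n ≤ t / x := by
      rw [rpow_pow_comm (by linarith), ← hxt, ← rpow_sub_one (by linarith)]
      exact rpow_le_rpow (by positivity) hn (by linarith)
    rw [div_le_iff₀ ht]
    calc (P ^ (α - 1)) ^ (n + 1) / (P ^ (α - 1) - 1)
        = P ^ (α - 1) / (P ^ (α - 1) - 1) * (P ^ (α - 1)) ^ n := by ring
      _ ≤ P ^ (α - 1) / (P ^ (α - 1) - 1) * (t / x) :=
          mul_le_mul_of_nonneg_left hrn (div_nonneg (by linarith) (by linarith))
      _ = _ := by ring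
  have htail : P⁻¹ ^ (n + 1) ≤ x⁻¹ := by
    rw [inv_pow]; exact inv_anti₀ (by linarith) hn'.le
  rw [hx', sojournSum, ← (summable_sojournSum hP ht.le).sum_add_tsum_nat_add (n + 1), add_mul]
  gcongr
  · exact (sum_range_sojournSum_le hP hα ht _).trans hhead
  · calc _ ≤ P⁻¹ ^ (n + 1) * (1 - P⁻¹)⁻¹ := tsum_sojournSum_nat_add_le hP ht.le _
      _ ≤ _ := by rw [mul_comm]; gcongr

lemma mul_rpow_le_integral_sojournSum (hP : 1 < P) (hα : 0 < α) (ht : 1 ≤ t) :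
    (P * exp 1)⁻¹ * t ^ (1 - α⁻¹) ≤ ∫ s in (0 : ℝ)..t, sojournSum P α s :=
  calc (P * exp 1)⁻¹ * t ^ (1 - α⁻¹) = t * ((P * exp 1)⁻¹ * t ^ (-α⁻¹)) := by
        rw [rpow_sub (by linarith), rpow_one, rpow_neg (by linarith)]; ring
    _ ≤ t * sojournSum P α t := by gcongr; exact le_sojournSum hP hα ht
    _ ≤ ∫ s in (0 : ℝ)..t, sojournSum P α s :=
        mul_le_integral_of_antitoneOn (by linarith)
          ((sojournSum_antitoneOn hP).mono Set.Icc_subset_Ici_self)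

lemma integral_sojournSum_le_mul_rpow (hP : 1 < P) (hα : 1 < α) (ht : 0 ≤ t) :
    ∫ s in (0 : ℝ)..t, sojournSum P α s ≤
      (P ^ (α - 1) / (P ^ (α - 1) - 1) + (1 - P⁻¹)⁻¹) / (1 - α⁻¹) * t ^ (1 - α⁻¹) := by
  refine integral_le_of_le_mul_rpow (inv_lt_one_of_one_lt₀ hα) ht ?_
    fun s hs => sojournSum_le_mul_rpow hP hα hs.1
  refine AntitoneOn.intervalIntegrable ((sojournSum_antitoneOn hP).mono ?_)
  rw [Set.uIcc_of_le ht]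
  exact Set.Icc_subset_Ici_self

end sojournSum

/-- Asymptotics of the mean sojourn time for `α > 1`: there are constants
  `0 < c₁ ≤ c₂` with `c₁ t^{(α-1)/α} ≤ ∫_0^t J ≤ c₂ t^{(α-1)/α}` for large `t`. -/
theorem stmt12 (p : ℕ) (hp : p.Prime) (α : ℝ) (hα : 1 < α)
    (J : ℝ → ℝ)
    (hJ : ∀ t : ℝ, J t = (1 - (p : ℝ)⁻¹) *
      ∑' n : ℕ, (p : ℝ) ^ (-(n : ℝ)) * Real.exp (-(p : ℝ) ^ (-(α * (n : ℝ))) * t)) :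
    ∃ c₁ c₂ : ℝ, 0 < c₁ ∧ c₁ ≤ c₂ ∧ ∃ T : ℝ, ∀ t : ℝ, T ≤ t →
      c₁ * t ^ ((α - 1) / α) ≤ (∫ t' in (0 : ℝ)..t, J t') ∧
      (∫ t' in (0 : ℝ)..t, J t') ≤ c₂ * t ^ ((α - 1) / α) := by
  have hP : (1 : ℝ) < p := by exact_mod_cast hp.one_lt
  have hw : 0 < 1 - (p : ℝ)⁻¹ := sub_pos.2 (inv_lt_one_of_one_lt₀ hP)
  have hJS : J = fun t => (1 - (p : ℝ)⁻¹) * sojournSum p α t :=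
    funext fun t => by rw [hJ, sojournSum_eq_tsum_rpow (by linarith)]
  have hexp : (α - 1) / α = 1 - α⁻¹ := by field_simp
  simp only [hJS, intervalIntegral.integral_const_mul, hexp]
  have hlow (t : ℝ) (ht : 1 ≤ t) := mul_le_mul_of_nonneg_left
    (mul_rpow_le_integral_sojournSum hP (α := α) (by linarith) ht) hw.le
  have hup (t : ℝ) (ht : 1 ≤ t) := mul_le_mul_of_nonneg_left
    (integral_sojournSum_le_mul_rpow hP hα (t := t) (by linarith)) hw.le
  refine ⟨(1 - (p : ℝ)⁻¹) * (p * exp 1)⁻¹, (1 - (p : ℝ)⁻¹) *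
    (((p : ℝ) ^ (α - 1) / ((p : ℝ) ^ (α - 1) - 1) + (1 - (p : ℝ)⁻¹)⁻¹) / (1 - α⁻¹)),
    by positivity, ?_, 1, fun t ht => ⟨?_, ?_⟩⟩
  · simpa using (hlow 1 le_rfl).trans (hup 1 le_rfl)
  · simpa only [mul_assoc] using hlow t ht
  · simpa only [mul_assoc] using hup t ht
end

section
/- Series representation of the one-sided stable density (Lemma 1): for 0 < γ < 1, a = Γ(1-γ), and any ε > 0, the series f_γ(t) = (1/π) Σ_{n=1}^∞ (-1)^{n+1} (a^n sin(nπγ)/n!) Γ(nγ+1) t^{-nγ-1} converges absolutely and uniformly for t ≥ ε. -/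
/-!
Weierstrass M-test. For `t ≥ ε` the `m`-th term is at most `(π ε)⁻¹ xᵐ Γ(mγ+1) / m!` with
`x = a ε^(-γ)`. Log-convexity of `Γ` between `1` and `m + 1` gives `Γ(mγ+1) ≤ (m!)^γ`, so the
majorant is `(π ε)⁻¹ xᵐ / (m!)^(1-γ)`, whose consecutive ratios `x / (m+1)^(1-γ)` tend to `0`.
-/

open Real Filter Topology Nat

theorem Real.Gamma_mul_add_one_le_factorial_rpow {γ : ℝ} (hγ0 : 0 < γ) (hγ1 : γ < 1) (n : ℕ) :
    Gamma (n * γ + 1) ≤ (n ! : ℝ) ^ γ := by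
  have h := Gamma_mul_add_mul_le_rpow_Gamma_mul_rpow_Gamma (s := n + 1) (t := 1)
    (by positivity) one_pos hγ0 (sub_pos.2 hγ1) (add_sub_cancel γ 1)
  rwa [show γ * (n + 1) + (1 - γ) * 1 = n * γ + 1 by ring, Gamma_nat_eq_factorial, Gamma_one,
    one_rpow, mul_one] at h

theorem summable_pow_div_factorial_rpow {p : ℝ} (hp : 0 < p) (x : ℝ) :
    Summable fun n : ℕ => x ^ n / (n ! : ℝ) ^ p := by
  have hstep (n : ℕ) : x ^ (n + 1) / ((n + 1)! : ℝ) ^ p =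
      x / ((n : ℝ) + 1) ^ p * (x ^ n / (n ! : ℝ) ^ p) := by
    rw [factorial_succ, cast_mul, mul_rpow (by positivity) (by positivity)]
    push_cast
    ring
  have hratio : Tendsto (fun n : ℕ => x / ((n : ℝ) + 1) ^ p) atTop (𝓝 0) :=
    tendsto_const_nhds.div_atTop <| (tendsto_rpow_atTop hp).comp <|
      tendsto_atTop_add_const_right _ _ tendsto_natCast_atTop_atTop
  refine summable_of_ratio_norm_eventually_le (r := 1 / 2) (by norm_num) ?_
  filter_upwards [hratio.norm.eventually (ge_mem_nhds (by norm_num : ‖(0 : ℝ)‖ < 1 / 2))]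
    with n hn
  rw [hstep, norm_mul]
  exact mul_le_mul_of_nonneg_right hn (norm_nonneg _)

theorem abs_stable_series_term_le {γ a ε t : ℝ} (hγ0 : 0 < γ) (hγ1 : γ < 1) (ha : 0 ≤ a)
    (hε : 0 < ε) (ht : ε ≤ t) (m : ℕ) :
    |1 / π * (-1) ^ (m + 1) * (a ^ m * sin (m * π * γ) / m !) * Gamma (m * γ + 1) *
        t ^ (-(m : ℝ) * γ - 1)| ≤
      (π * ε)⁻¹ * ((a * ε ^ (-γ)) ^ m / (m ! : ℝ) ^ (1 - γ)) := by
  have hfac : (0 : ℝ) < m ! := by positivity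
  have ht0 : 0 < t := hε.trans_le ht
  have hΓ : 0 < Gamma (m * γ + 1) := Gamma_pos_of_pos (by positivity)
  have ht_pow : t ^ (-(m : ℝ) * γ - 1) ≤ ε ^ (-(m : ℝ) * γ - 1) :=
    rpow_le_rpow_of_nonpos hε ht (by nlinarith [m.cast_nonneg (α := ℝ)])
  have hε_pow : ε ^ (-(m : ℝ) * γ - 1) = (ε ^ (-γ)) ^ m * ε⁻¹ := by
    rw [rpow_sub hε, rpow_one, ← rpow_natCast, ← rpow_mul hε.le, div_eq_mul_inv]
    ring_nf
  calc _ = π⁻¹ * (a ^ m * |sin (m * π * γ)| / m !) * Gamma (m * γ + 1) *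
          t ^ (-(m : ℝ) * γ - 1) := by
        simp only [abs_mul, abs_div, abs_pow, abs_neg, abs_one, one_pow, abs_of_nonneg ha,
          abs_of_pos hfac, abs_of_pos hΓ, abs_of_pos (rpow_pos_of_pos ht0 _),
          abs_inv, abs_of_pos pi_pos, one_div, mul_one]
    _ ≤ π⁻¹ * (a ^ m * 1 / m !) * (m ! : ℝ) ^ γ * ε ^ (-(m : ℝ) * γ - 1) := by
        gcongr
        · exact abs_sin_le_one _
        · exact Gamma_mul_add_one_le_factorial_rpow hγ0 hγ1 m
    _ = (π * ε)⁻¹ * ((a * ε ^ (-γ)) ^ m / (m ! : ℝ) ^ (1 - γ)) := by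
        rw [hε_pow, mul_pow, rpow_sub hfac, rpow_one]
        field_simp

/-- Lemma 1: for `0 < γ < 1`, `a = Γ(1-γ)`, and `ε > 0`, the series
  `f_γ(t) = (1/π) Σ_{n≥1} (-1)^{n+1} (aⁿ sin(nπγ)/n!) Γ(nγ+1) t^{-nγ-1}`
  converges absolutely and uniformly for `t ≥ ε`. -/
theorem stmt15 (γ : ℝ) (hγ0 : 0 < γ) (hγ1 : γ < 1) (ε : ℝ) (hε : 0 < ε)
    (a : ℝ) (ha : a = Real.Gamma (1 - γ))
    (b : ℕ → ℝ → ℝ)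
    (hb : ∀ (n : ℕ) (t : ℝ), b n t =
      (1 / π) * (-1 : ℝ) ^ (n + 1 + 1) * (a ^ (n + 1) * Real.sin ((n + 1) * π * γ) /
        (Nat.factorial (n + 1) : ℝ)) * Real.Gamma ((n + 1) * γ + 1) *
        t ^ (-((n : ℝ) + 1) * γ - 1)) :
    (∀ t : ℝ, ε ≤ t → Summable (fun n : ℕ => |b n t|)) ∧
      TendstoUniformlyOn (fun N : ℕ => fun t : ℝ => ∑ n ∈ Finset.range N, b n t)
        (fun t : ℝ => ∑' n : ℕ, b n t) atTop (Set.Ici ε) := by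
  have ha0 : 0 ≤ a := ha ▸ (Gamma_pos_of_pos (by linarith)).le
  set u : ℕ → ℝ := fun n => (π * ε)⁻¹ * ((a * ε ^ (-γ)) ^ (n + 1) / ((n + 1)! : ℝ) ^ (1 - γ))
  have hu : Summable u :=
    ((summable_nat_add_iff 1).2 (summable_pow_div_factorial_rpow (sub_pos.2 hγ1) _)).mul_left _
  have hbu : ∀ n t, t ∈ Set.Ici ε → ‖b n t‖ ≤ u n := by
    intro n t ht
    have h := abs_stable_series_term_le hγ0 hγ1 ha0 hε ht (n + 1)
    push_cast at h
    rwa [hb, Real.norm_eq_abs]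
  exact ⟨fun t ht => hu.of_nonneg_of_le (fun n => abs_nonneg _) (hbu · t ht),
    tendstoUniformlyOn_tsum_nat hu hbu⟩
end

section
/- Integral representation step in Lemma 1: for 0 < γ < 1, a > 0, and t > 0, Re[ i ∫_0^∞ e^{-kt} exp(-a e^{-iπγ} k^γ) dk ] = -(1/π)·π f_γ(t) where, after expanding the inner exponential in its power series and integrating term by term using ∫_0^∞ e^{-kt} k^{nγ} dk = Γ(nγ+1) t^{-nγ-1}, one obtains ∫_0^∞ e^{-kt} exp(-a e^{-iπγ} k^γ) dk = Σ_{n=0}^∞ ((-a)^n e^{-inπγ}/n!) Γ(nγ+1) t^{-nγ-1}. -/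
open Real Complex MeasureTheory Filter Set Topology

/-!
Expanding `exp (c k^γ) = ∑ (c k^γ)^n / n!` turns the integral into a sum of Gamma integrals
`∫₀^∞ e^{-tk} k^{nγ} dk = Γ(nγ+1) t^{-nγ-1}`. Term-by-term integration is dominated convergence:
the series of norms sums to `exp (‖c‖ k^γ - t k)`, which is integrable because `γ < 1` makes
`k^γ = o(k)`.
-/

section
variable {γ t : ℝ}

lemma integrableOn_exp_mul_rpow_sub_mul_Ioi (b : ℝ) (hγ0 : 0 ≤ γ) (hγ1 : γ < 1) (ht : 0 < t) :
    IntegrableOn (fun k : ℝ => rexp (b * k ^ γ - t * k)) (Ioi 0) := by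
  have hcont : Continuous fun k : ℝ => rexp (b * k ^ γ - t * k) := by
    have : Continuous fun k : ℝ => k ^ γ :=
      continuous_iff_continuousAt.2 fun k => continuousAt_rpow_const k γ (Or.inr hγ0)
    fun_prop
  refine integrable_of_isBigO_exp_neg (half_pos ht) hcont.continuousOn ?_
  -- `k ^ γ = o(k)`, so the exponent is eventually at most `-(t / 2) k`
  have hsmall : Tendsto (fun k : ℝ => b * k ^ (γ - 1)) atTop (𝓝 0) := by
    simpa using (tendsto_rpow_neg_atTop (by linarith : 0 < 1 - γ)).const_mul b
  refine Asymptotics.IsBigO.of_bound 1 ?_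
  filter_upwards [hsmall.eventually (gt_mem_nhds (half_pos ht)), eventually_gt_atTop 0]
    with k hk hk0
  have hsplit : k ^ γ = k ^ (γ - 1) * k := by
    rw [← rpow_add_one hk0.ne', sub_add_cancel]
  rw [norm_of_nonneg (exp_pos _).le, norm_of_nonneg (exp_pos _).le, one_mul, exp_le_exp, hsplit]
  nlinarith

lemma integral_exp_neg_mul_mul_rpow_pow (hγ : 0 ≤ γ) (ht : 0 < t) (n : ℕ) :
    ∫ k in Ioi (0 : ℝ), rexp (-(t * k)) * (k ^ γ) ^ n
      = Real.Gamma (n * γ + 1) * t ^ (-(n : ℝ) * γ - 1) := by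
  have hpow : ∀ k ∈ Ioi (0 : ℝ), rexp (-(t * k)) * (k ^ γ) ^ n
      = k ^ ((n * γ + 1) - 1) * rexp (-(t * k)) := fun k hk => by
    rw [add_sub_cancel_right, ← rpow_natCast, ← rpow_mul (le_of_lt hk), mul_comm γ, mul_comm]
  rw [setIntegral_congr_fun measurableSet_Ioi hpow,
    integral_rpow_mul_exp_neg_mul_Ioi (by positivity) ht, mul_comm, one_div,
    inv_rpow ht.le, ← rpow_neg ht.le, neg_add', neg_mul]

lemma norm_cexp_neg_mul_mul_pow_div (c : ℂ) {k : ℝ} (hk : 0 < k) (n : ℕ) :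
    ‖cexp (-(k : ℂ) * t) * ((c * (k : ℂ) ^ (γ : ℂ)) ^ n / n.factorial)‖
      = rexp (-(t * k)) * ((‖c‖ * k ^ γ) ^ n / n.factorial) := by
  rw [norm_mul, norm_div, norm_pow, norm_mul, norm_cpow_eq_rpow_re_of_pos hk, Complex.norm_exp,
    Complex.norm_natCast, ofReal_re]
  congr 2
  simp [mul_comm]

lemma integral_cexp_neg_mul_mul_pow_div (c : ℂ) (hγ : 0 ≤ γ) (ht : 0 < t) (n : ℕ) :
    ∫ k in Ioi (0 : ℝ), cexp (-(k : ℂ) * t) * ((c * (k : ℂ) ^ (γ : ℂ)) ^ n / n.factorial)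
      = c ^ n / n.factorial * Real.Gamma (n * γ + 1) * ((t ^ (-(n : ℝ) * γ - 1) : ℝ) : ℂ) := by
  have hofReal : ∀ k ∈ Ioi (0 : ℝ),
      cexp (-(k : ℂ) * t) * ((c * (k : ℂ) ^ (γ : ℂ)) ^ n / n.factorial)
        = c ^ n / n.factorial * ((rexp (-(t * k)) * (k ^ γ) ^ n : ℝ) : ℂ) := fun k hk => by
    rw [← ofReal_cpow (le_of_lt hk)]
    push_cast
    ring_nf
  rw [setIntegral_congr_fun measurableSet_Ioi hofReal, integral_const_mul, integral_complex_ofReal,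
    integral_exp_neg_mul_mul_rpow_pow hγ ht, ofReal_mul, mul_assoc]

theorem integrableOn_cexp_neg_mul_mul_cexp_mul_cpow (c : ℂ) (hγ0 : 0 ≤ γ) (hγ1 : γ < 1)
    (ht : 0 < t) :
    IntegrableOn (fun k : ℝ => cexp (-(k : ℂ) * t) * cexp (c * (k : ℂ) ^ (γ : ℂ))) (Ioi 0) := by
  refine (integrableOn_exp_mul_rpow_sub_mul_Ioi ‖c‖ hγ0 hγ1 ht).mono' (by fun_prop) ?_
  refine (ae_restrict_iff' measurableSet_Ioi).2 (Eventually.of_forall fun k hk => ?_)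
  calc ‖cexp (-(k : ℂ) * t) * cexp (c * (k : ℂ) ^ (γ : ℂ))‖
      ≤ rexp (-(t * k)) * rexp ‖c * (k : ℂ) ^ (γ : ℂ)‖ := by
        rw [norm_mul, Complex.norm_exp]
        gcongr
        · simp [mul_comm]
        · exact norm_exp_le_exp_norm _
    _ = rexp (‖c‖ * k ^ γ - t * k) := by
        rw [norm_mul, norm_cpow_eq_rpow_re_of_pos hk, ofReal_re, ← Real.exp_add]
        ring_nf

theorem hasSum_integral_cexp_neg_mul_mul_cexp_mul_cpow (c : ℂ) (hγ0 : 0 ≤ γ) (hγ1 : γ < 1)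
    (ht : 0 < t) :
    HasSum (fun n : ℕ => c ^ n / n.factorial * Real.Gamma (n * γ + 1) *
        ((t ^ (-(n : ℝ) * γ - 1) : ℝ) : ℂ))
      (∫ k in Ioi (0 : ℝ), cexp (-(k : ℂ) * t) * cexp (c * (k : ℂ) ^ (γ : ℂ))) := by
  simp_rw [← integral_cexp_neg_mul_mul_pow_div c hγ0 ht]
  refine hasSum_integral_of_dominated_convergence
    (fun n k => rexp (-(t * k)) * ((‖c‖ * k ^ γ) ^ n / n.factorial)) (fun n => by fun_prop)
    (fun n => (ae_restrict_iff' measurableSet_Ioi).2 (Eventually.of_forall fun k hk =>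
      (norm_cexp_neg_mul_mul_pow_div c hk n).le))
    (Eventually.of_forall fun k => (Real.summable_pow_div_factorial _).mul_left _) ?_
    (Eventually.of_forall fun k => ?_)
  · refine (integrableOn_exp_mul_rpow_sub_mul_Ioi ‖c‖ hγ0 hγ1 ht).congr_fun (fun k _ => ?_)
      measurableSet_Ioi
    rw [tsum_mul_left, (NormedSpace.expSeries_div_hasSum_exp _).tsum_eq, ← Real.exp_eq_exp_ℝ,
      ← Real.exp_add]
    ring_nf
  · simpa [Complex.exp_eq_exp_ℂ] using
      (NormedSpace.expSeries_div_hasSum_exp (c * (k : ℂ) ^ (γ : ℂ))).mul_left (cexp (-(k : ℂ) * t))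

end

theorem stmt16_general (γ a t : ℝ) (hγ0 : 0 < γ) (hγ1 : γ < 1) (ht : 0 < t) :
    IntegrableOn (fun k : ℝ =>
      Complex.exp (-(k : ℂ) * (t : ℂ)) *
        Complex.exp (-(a : ℂ) * Complex.exp (-(π : ℂ) * (γ : ℂ) * Complex.I) *
          (k : ℂ) ^ (γ : ℂ))) (Set.Ioi 0) ∧
    (∫ k in Set.Ioi (0 : ℝ),
        Complex.exp (-(k : ℂ) * (t : ℂ)) *
          Complex.exp (-(a : ℂ) * Complex.exp (-(π : ℂ) * (γ : ℂ) * Complex.I) *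
            (k : ℂ) ^ (γ : ℂ)))
      = ∑' n : ℕ, ((-(a : ℂ)) ^ n * Complex.exp (-(n : ℂ) * (π : ℂ) * (γ : ℂ) * Complex.I)
          / (Nat.factorial n : ℂ)) *
          (Real.Gamma ((n : ℝ) * γ + 1) : ℂ) * ((t ^ (-(n : ℝ) * γ - 1) : ℝ) : ℂ) := by
  set c : ℂ := -(a : ℂ) * Complex.exp (-(π : ℂ) * (γ : ℂ) * Complex.I)
  refine ⟨integrableOn_cexp_neg_mul_mul_cexp_mul_cpow c hγ0.le hγ1 ht, ?_⟩
  rw [← (hasSum_integral_cexp_neg_mul_mul_cexp_mul_cpow c hγ0.le hγ1 ht).tsum_eq]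
  refine tsum_congr fun n => ?_
  rw [mul_pow, ← Complex.exp_nat_mul]
  ring_nf

/-- Integral representation step in Lemma 1: for `0 < γ < 1`, `a > 0`, `t > 0`, the
  integral `∫_0^∞ e^{-kt} exp(-a e^{-iπγ} k^γ) dk` converges absolutely and equals
  `Σ_{n≥0} ((-a)^n e^{-inπγ}/n!) Γ(nγ+1) t^{-nγ-1}`. -/
theorem stmt16 (γ a t : ℝ) (hγ0 : 0 < γ) (hγ1 : γ < 1) (ha : 0 < a) (ht : 0 < t) :
    IntegrableOn (fun k : ℝ =>
      Complex.exp (-(k : ℂ) * (t : ℂ)) *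
        Complex.exp (-(a : ℂ) * Complex.exp (-(π : ℂ) * (γ : ℂ) * Complex.I) *
          (k : ℂ) ^ (γ : ℂ))) (Set.Ioi 0) ∧
    (∫ k in Set.Ioi (0 : ℝ),
        Complex.exp (-(k : ℂ) * (t : ℂ)) *
          Complex.exp (-(a : ℂ) * Complex.exp (-(π : ℂ) * (γ : ℂ) * Complex.I) *
            (k : ℂ) ^ (γ : ℂ)))
      = ∑' n : ℕ, ((-(a : ℂ)) ^ n * Complex.exp (-(n : ℂ) * (π : ℂ) * (γ : ℂ) * Complex.I)
          / (Nat.factorial n : ℂ)) *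
          (Real.Gamma ((n : ℝ) * γ + 1) : ℂ) * ((t ^ (-(n : ℝ) * γ - 1) : ℝ) : ℂ) :=
  stmt16_general γ a t hγ0 hγ1 ht
end
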